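/- For every a ∈ ℂ^m, T(a)^F ⊆ (a^{Re F})^{Re F} ∩ a^{Re F}. -/

import Mathlib

open Matrix Complex

/-- The standard Hermitian inner product on `ℂ^m`: `⟪a,b⟫ = ∑ l, a l * conj (b l)`. -/
noncomputable def hermInner {m : ℕ} (a b : Fin m → ℂ) : ℂ :=
  ∑ l, a l * (starRingEnd ℂ) (b l)

/-- The `ℂ^k`-valued Hermitian form `F(z,ζ) = (⟪A₁ z, ζ⟫, …, ⟪A_k z, ζ⟫)`. -/
noncomputable def Fform {m k : ℕ} (A : Fin k → Matrix (Fin m) (Fin m) ℂ)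
    (z ζ : Fin m → ℂ) : Fin k → ℂ :=
  fun j => hermInner ((A j).mulVec z) ζ

/-- The orthogonal complement `S^F` of a set `S ⊆ ℂ^m`. -/
noncomputable def orthF {m k : ℕ} (A : Fin k → Matrix (Fin m) (Fin m) ℂ)
    (S : Set (Fin m → ℂ)) : Set (Fin m → ℂ) :=
  {x | ∀ y ∈ S, Fform A x y = 0}

/-- The subspace `T(a,b) = {y : ∃ x, F(x,b) + F(a,y) = 0}`. -/
noncomputable def Tspace {m k : ℕ} (A : Fin k → Matrix (Fin m) (Fin m) ℂ)
    (a b : Fin m → ℂ) : Set (Fin m → ℂ) :=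
  {y | ∃ x, Fform A x b + Fform A a y = 0}

/-- `F` is nondegenerate: the `A_j` are `ℝ`-linearly independent, and
`F(z,ζ) = 0` for all `z` implies `ζ = 0`. -/
noncomputable def FNondeg {m k : ℕ} (A : Fin k → Matrix (Fin m) (Fin m) ℂ) : Prop :=
  LinearIndependent ℝ A ∧ ∀ ζ : Fin m → ℂ, (∀ z : Fin m → ℂ, Fform A z ζ = 0) → ζ = 0

/-- `F` is T-nondegenerate: for generic `a ∈ ℂ^m`, `T(a)^F = {0}`. -/
noncomputable def TNondeg {m k : ℕ} (A : Fin k → Matrix (Fin m) (Fin m) ℂ) : Prop :=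
  ∃ U : Set (Fin m → ℂ), IsOpen U ∧ Dense U ∧
    ∀ a ∈ U, orthF A (Tspace A a a) = {0}

/-- The orthogonal complement `S^{Re F}` of a set `S ⊆ ℂ^m` with respect to
the componentwise real part of `F`. -/
noncomputable def orthReF {m k : ℕ} (A : Fin k → Matrix (Fin m) (Fin m) ℂ)
    (S : Set (Fin m → ℂ)) : Set (Fin m → ℂ) :=
  {x | ∀ y ∈ S, ∀ j, (Fform A x y j).re = 0}

/-!
Both inclusions come from the antitonicity of `S ↦ S^F` together with `S^F ⊆ S^{Re F}`, once two
subsets of `T(a)` are found: `a` itself (witness `x = -a`), and `a^{Re F}`, because for Hermitian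
`A_j` and the witness `x = y` one has `F(y,a) + F(a,y) = 2 Re F(y,a)`.
-/

open scoped ComplexConjugate

lemma Matrix.IsHermitian.mulVec_dotProduct_star {n α : Type*} [Fintype n] [CommRing α]
    [StarRing α] {M : Matrix n n α} (hM : M.IsHermitian) (z ζ : n → α) :
    (M *ᵥ z) ⬝ᵥ star ζ = star ((M *ᵥ ζ) ⬝ᵥ star z) := by
  rw [dotProduct_star, star_mulVec, hM.eq, dotProduct_comm (M *ᵥ ζ), dotProduct_mulVec,
    dotProduct_comm]

lemma hermInner_eq_dotProduct {m : ℕ} (a b : Fin m → ℂ) : hermInner a b = a ⬝ᵥ star b := rfl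

lemma Fform_neg_left {m k : ℕ} (A : Fin k → Matrix (Fin m) (Fin m) ℂ) (z ζ : Fin m → ℂ) :
    Fform A (-z) ζ = -Fform A z ζ := by
  funext j
  simp only [Fform, hermInner_eq_dotProduct, mulVec_neg, neg_dotProduct, Pi.neg_apply]

lemma Fform_apply_eq_conj {m k : ℕ} {A : Fin k → Matrix (Fin m) (Fin m) ℂ}
    (hA : ∀ j, (A j).IsHermitian) (z ζ : Fin m → ℂ) (j : Fin k) :
    Fform A z ζ j = conj (Fform A ζ z j) :=
  (hA j).mulVec_dotProduct_star z ζ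

lemma orthF_subset_orthReF {m k : ℕ} (A : Fin k → Matrix (Fin m) (Fin m) ℂ)
    (S : Set (Fin m → ℂ)) : orthF A S ⊆ orthReF A S :=
  fun _ hx y hy j => by rw [hx y hy, Pi.zero_apply, zero_re]

lemma orthF_anti {m k : ℕ} (A : Fin k → Matrix (Fin m) (Fin m) ℂ) {S S' : Set (Fin m → ℂ)}
    (h : S ⊆ S') : orthF A S' ⊆ orthF A S :=
  fun _ hx y hy => hx y (h hy)

lemma self_mem_Tspace {m k : ℕ} (A : Fin k → Matrix (Fin m) (Fin m) ℂ) (a : Fin m → ℂ) :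
    a ∈ Tspace A a a :=
  ⟨-a, by rw [Fform_neg_left, neg_add_cancel]⟩

lemma orthReF_singleton_subset_Tspace {m k : ℕ} {A : Fin k → Matrix (Fin m) (Fin m) ℂ}
    (hA : ∀ j, (A j).IsHermitian) (a : Fin m → ℂ) : orthReF A {a} ⊆ Tspace A a a := by
  intro y hy
  refine ⟨y, funext fun j => ?_⟩
  rw [Pi.add_apply, Fform_apply_eq_conj hA a y, add_conj, hy a rfl j, mul_zero, ofReal_zero,
    Pi.zero_apply]

theorem stmt10_general {m k : ℕ}
    (A : Fin k → Matrix (Fin m) (Fin m) ℂ) (hHerm : ∀ j, (A j).IsHermitian) :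
    ∀ a : Fin m → ℂ,
      orthF A (Tspace A a a) ⊆ orthReF A (orthReF A {a}) ∩ orthReF A {a} := fun a =>
  Set.subset_inter
    ((orthF_anti A (orthReF_singleton_subset_Tspace hHerm a)).trans (orthF_subset_orthReF A _))
    ((orthF_anti A (Set.singleton_subset_iff.2 (self_mem_Tspace A a))).trans
      (orthF_subset_orthReF A _))

theorem stmt10 {m k : ℕ} (hm : 0 < m) (hk : 0 < k)
    (A : Fin k → Matrix (Fin m) (Fin m) ℂ) (hHerm : ∀ j, (A j).IsHermitian) :
    ∀ a : Fin m → ℂ,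
      orthF A (Tspace A a a) ⊆ orthReF A (orthReF A {a}) ∩ orthReF A {a} :=
  stmt10_general A hHerm
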